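/- arXiv:2406.16270 — 2 statements merged into one kernel-verified Lean document; each statement's English description precedes it below -/
import Mathlib

section
/- If the Space Saving algorithm with k counters has processed N insertions, then the minimum counter value among all monitored items is at most N/k. -/
/-!
Every arrival raises the sum of the monitored counters by exactly one (an evicted item's counter
is inherited, plus one, by its replacement), so after `N` insertions the `k` counters sum to `N`
and their minimum is at most their average `N / k`.
-/

/-- State of the Space Saving algorithm: a set `T` of monitored items and a
counter function `c` (counters of unmonitored items are 0). -/
structure SSState (α : Type) where
  T : Finset α
  c : α → ℕ

/-- One step of Space Saving with `k` counters on arrival of item `i`. -/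
def ssStep {α : Type} [DecidableEq α] (k : ℕ) (i : α) (s s' : SSState α) : Prop :=
  (i ∈ s.T ∧ s'.T = s.T ∧ s'.c = Function.update s.c i (s.c i + 1)) ∨
  (i ∉ s.T ∧ s.T.card < k ∧ s'.T = insert i s.T ∧ s'.c = Function.update s.c i 1) ∨
  (i ∉ s.T ∧ s.T.card = k ∧ ∃ j ∈ s.T, (∀ j' ∈ s.T, s.c j ≤ s.c j') ∧
      s'.T = insert i (s.T.erase j) ∧
      s'.c = Function.update (Function.update s.c j 0) i (s.c j + 1))

/-- `ssRun k l s` : processing the stream `l` from the empty initial state can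
lead Space Saving with `k` counters to state `s`. -/
inductive ssRun {α : Type} [DecidableEq α] (k : ℕ) : List α → SSState α → Prop
  | nil : ssRun k [] ⟨∅, fun _ => 0⟩
  | snoc {l : List α} {s s' : SSState α} {i : α} :
      ssRun k l s → ssStep k i s s' → ssRun k (l ++ [i]) s'

/-- The reported frequency estimate: the counter of `i` if monitored,
otherwise the minimum counter. -/
def ssEst {α : Type} [DecidableEq α] (s : SSState α) (h : s.T.Nonempty) (i : α) : ℕ :=
  if i ∈ s.T then s.c i else s.T.inf' h s.c

open scoped BigOperators

theorem ssStep.sum_counters {α : Type} [DecidableEq α] {k : ℕ} {i : α} {s s' : SSState α}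
    (h : ssStep k i s s') : ∑ x ∈ s'.T, s'.c x = ∑ x ∈ s.T, s.c x + 1 := by
  rcases h with ⟨hi, hT, hc⟩ | ⟨hi, -, hT, hc⟩ | ⟨hi, -, j, hj, -, hT, hc⟩
  · rw [hT, hc, Finset.sum_update_of_mem hi, ← Finset.sum_erase_add _ _ hi,
      Finset.sdiff_singleton_eq_erase]
    ring
  · rw [hT, hc, Finset.sum_insert hi, Function.update_self, Finset.sum_update_of_notMem hi,
      add_comm]
  · have hi' : i ∉ s.T.erase j := fun h => hi (Finset.mem_of_mem_erase h)
    rw [hT, hc, Finset.sum_insert hi', Function.update_self, Finset.sum_update_of_notMem hi',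
      Finset.sum_update_of_notMem (Finset.notMem_erase j s.T), ← Finset.sum_erase_add _ _ hj]
    ring

theorem ssRun.sum_counters {α : Type} [DecidableEq α] {k : ℕ} {l : List α} {s : SSState α}
    (h : ssRun k l s) : ∑ x ∈ s.T, s.c x = l.length := by
  induction h with
  | nil => simp
  | snoc _ hstep ih => rw [hstep.sum_counters, ih, List.length_append, List.length_singleton]

theorem spaceSaving_minCount_le_general {α : Type} [DecidableEq α] (k N : ℕ)
    (l : List α) (s : SSState α) (hrun : ssRun k l s) (hN : l.length = N)
    (hfull : s.T.card = k) (hne : s.T.Nonempty) :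
    ((s.T.inf' hne s.c : ℕ) : ℝ) ≤ (N : ℝ) / (k : ℝ) := by
  have hsum : ∑ x ∈ s.T, (s.c x : ℝ) = N := by exact_mod_cast hN ▸ hrun.sum_counters
  calc ((s.T.inf' hne s.c : ℕ) : ℝ)
      ≤ 𝔼 x ∈ s.T, (s.c x : ℝ) := Finset.le_expect hne fun x hx => mod_cast s.T.inf'_le _ hx
    _ = N / k := by rw [Finset.expect_eq_sum_div_card, hsum, hfull]

/-- After processing `N` insertions with a full table, the minimum counter of
Space Saving with `k` counters is at most `N / k`. -/
theorem spaceSaving_minCount_le {α : Type} [DecidableEq α] (k N : ℕ) (hk : 0 < k)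
    (l : List α) (s : SSState α) (hrun : ssRun k l s) (hN : l.length = N)
    (hfull : s.T.card = k) (hne : s.T.Nonempty) :
    ((s.T.inf' hne s.c : ℕ) : ℝ) ≤ (N : ℝ) / (k : ℝ) :=
  spaceSaving_minCount_le_general k N l s hrun hN hfull hne
end

section
/- For every item i, the Space Saving estimate satisfies f_i ≤ f̂_i ≤ f_i + minCount, where f_i is the true frequency of i, f̂_i is the reported estimate (the counter of i if monitored, else the minimum counter), and minCount is the minimum counter value. -/
/-!
Space Saving keeps a threshold `μ` below every counter such that each unmonitored item has
occurred at most `μ` times and each monitored counter overestimates its item's frequency by at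
most `μ`. As long as a counter is free nothing has been evicted and `μ = 0` works; an eviction of
the minimal counter `c_j` raises the threshold to `c_j`, which still lies below every counter, and
the evicted item, with `f_j ≤ c_j`, becomes unmonitored within the new threshold. At the end
`μ ≤ minCount`.
-/

theorem List.count_append_singleton_self {α : Type} [DecidableEq α] (l : List α) (a : α) :
    (l ++ [a]).count a = l.count a + 1 := by
  simp [List.count_append]

theorem List.count_append_singleton_of_ne {α : Type} [DecidableEq α] (l : List α) {a b : α}
    (h : a ≠ b) : (l ++ [b]).count a = l.count a := by
  simp [List.count_append, h.symm]

namespace SSState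

variable {α : Type} [DecidableEq α]

structure ErrorBound (l : List α) (s : SSState α) (μ : ℕ) : Prop where
  le_counter : ∀ j ∈ s.T, μ ≤ s.c j
  count_le_of_notMem : ∀ x ∉ s.T, l.count x ≤ μ
  count_le_counter : ∀ x ∈ s.T, l.count x ≤ s.c x
  counter_le : ∀ x ∈ s.T, s.c x ≤ l.count x + μ

namespace ErrorBound

variable {l : List α} {s : SSState α} {μ : ℕ}

open List

theorem le_inf' (h : ErrorBound l s μ) (hne : s.T.Nonempty) : μ ≤ s.T.inf' hne s.c :=
  Finset.le_inf' hne _ h.le_counter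

theorem increment (h : ErrorBound l s μ) {i : α} (hi : i ∈ s.T) :
    ErrorBound (l ++ [i]) ⟨s.T, Function.update s.c i (s.c i + 1)⟩ μ where
  le_counter x hx := by
    have := h.le_counter x hx
    rcases eq_or_ne x i with rfl | hxi
    · simp only [Function.update_self]; omega
    · simpa [hxi] using this
  count_le_of_notMem x hx := by
    have hxi : x ≠ i := by rintro rfl; exact hx hi
    simpa [count_append_singleton_of_ne l hxi] using h.count_le_of_notMem x hx
  count_le_counter x hx := by
    have := h.count_le_counter x hx
    rcases eq_or_ne x i with rfl | hxi
    · simpa [count_append_singleton_self] using this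
    · simpa [count_append_singleton_of_ne l hxi, hxi] using this
  counter_le x hx := by
    have := h.counter_le x hx
    rcases eq_or_ne x i with rfl | hxi
    · simp only [count_append_singleton_self, Function.update_self]; omega
    · simpa [count_append_singleton_of_ne l hxi, hxi] using this

theorem insert_zero (h : ErrorBound l s 0) {i : α} (hi : i ∉ s.T) :
    ErrorBound (l ++ [i]) ⟨insert i s.T, Function.update s.c i 1⟩ 0 where
  le_counter _ _ := Nat.zero_le _
  count_le_of_notMem x hx := by
    simp only [Finset.mem_insert, not_or] at hx
    simpa [count_append_singleton_of_ne l hx.1] using h.count_le_of_notMem x hx.2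
  count_le_counter x hx := by
    rcases eq_or_ne x i with rfl | hxi
    · simpa [count_append_singleton_self] using h.count_le_of_notMem x hi
    · have hxT : x ∈ s.T := by simpa [hxi] using hx
      simpa [count_append_singleton_of_ne l hxi, hxi] using h.count_le_counter x hxT
  counter_le x hx := by
    rcases eq_or_ne x i with rfl | hxi
    · simp
    · have hxT : x ∈ s.T := by simpa [hxi] using hx
      simpa [count_append_singleton_of_ne l hxi, hxi] using h.counter_le x hxT

theorem evict (h : ErrorBound l s μ) {i j : α} (hi : i ∉ s.T) (hj : j ∈ s.T)
    (hmin : ∀ j' ∈ s.T, s.c j ≤ s.c j') :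
    ErrorBound (l ++ [i])
      ⟨insert i (s.T.erase j), Function.update (Function.update s.c j 0) i (s.c j + 1)⟩
      (s.c j) := by
  have hji : j ≠ i := by rintro rfl; exact hi hj
  have hμ := h.le_counter j hj
  have mem_old : ∀ {x}, x ≠ i → x ∈ insert i (s.T.erase j) → x ∈ s.T ∧ x ≠ j := by
    intro x hxi hx
    simp only [Finset.mem_insert, Finset.mem_erase, hxi, false_or] at hx
    exact ⟨hx.2, hx.1⟩
  refine ⟨fun x hx => ?_, fun x hx => ?_, fun x hx => ?_, fun x hx => ?_⟩
  · rcases eq_or_ne x i with rfl | hxi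
    · simp
    · obtain ⟨hxT, hxj⟩ := mem_old hxi hx
      simpa [hxi, hxj] using hmin x hxT
  · have hxi : x ≠ i := by rintro rfl; simp at hx
    rw [count_append_singleton_of_ne l hxi]
    by_cases hxT : x ∈ s.T
    · have hxj : x = j := by by_contra hxj; simp [hxi, hxj, hxT] at hx
      exact hxj ▸ h.count_le_counter x hxT
    · exact (h.count_le_of_notMem x hxT).trans hμ
  · rcases eq_or_ne x i with rfl | hxi
    · simpa [count_append_singleton_self] using (h.count_le_of_notMem x hi).trans hμ
    · obtain ⟨hxT, hxj⟩ := mem_old hxi hx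
      simpa [count_append_singleton_of_ne l hxi, hxi, hxj] using h.count_le_counter x hxT
  · rcases eq_or_ne x i with rfl | hxi
    · simp only [count_append_singleton_self, Function.update_self]; omega
    · obtain ⟨hxT, hxj⟩ := mem_old hxi hx
      have := h.counter_le x hxT
      simp only [count_append_singleton_of_ne l hxi, Function.update_of_ne hxi,
        Function.update_of_ne hxj]
      omega

end ErrorBound

end SSState

open SSState in
theorem ssRun.exists_errorBound {α : Type} [DecidableEq α] {k : ℕ} {l : List α} {s : SSState α}
    (hrun : ssRun k l s) : ∃ μ, ErrorBound l s μ ∧ (s.T.card < k → μ = 0) := by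
  induction hrun with
  | nil => exact ⟨0, ⟨by simp, by simp, by simp, by simp⟩, fun _ => rfl⟩
  | @snoc l s s' i _ hstep ih =>
    obtain ⟨μ, hμ, hfree⟩ := ih
    obtain ⟨T', c'⟩ := s'
    rcases hstep with ⟨hi, hT, hc⟩ | ⟨hi, hcard, hT, hc⟩ | ⟨hi, hcard, j, hj, hmin, hT, hc⟩ <;>
      dsimp only at hT hc <;> subst hT hc
    · exact ⟨μ, hμ.increment hi, hfree⟩
    · exact ⟨0, (hfree hcard ▸ hμ).insert_zero hi, fun _ => rfl⟩
    · refine ⟨s.c j, hμ.evict hi hj hmin, fun hlt => absurd hlt ?_⟩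
      rw [Finset.card_insert_of_notMem (by simp [hi]), Finset.card_erase_add_one hj, hcard]
      exact lt_irrefl k

theorem spaceSaving_estimate_bounds_general {α : Type} [DecidableEq α] (k : ℕ)
    (l : List α) (s : SSState α) (hrun : ssRun k l s) (hne : s.T.Nonempty) (i : α) :
    l.count i ≤ ssEst s hne i ∧ ssEst s hne i ≤ l.count i + s.T.inf' hne s.c := by
  obtain ⟨μ, hμ, -⟩ := hrun.exists_errorBound
  have hmin := hμ.le_inf' hne
  by_cases hi : i ∈ s.T
  · rw [ssEst, if_pos hi]
    exact ⟨hμ.count_le_counter i hi, (hμ.counter_le i hi).trans (by omega)⟩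
  · rw [ssEst, if_neg hi]
    exact ⟨(hμ.count_le_of_notMem i hi).trans hmin, Nat.le_add_left _ _⟩

/-- For every item `i`, the Space Saving estimate satisfies
`f_i ≤ est_i ≤ f_i + minCount`. -/
theorem spaceSaving_estimate_bounds {α : Type} [DecidableEq α] (k : ℕ) (hk : 0 < k)
    (l : List α) (s : SSState α) (hrun : ssRun k l s) (hne : s.T.Nonempty) (i : α) :
    l.count i ≤ ssEst s hne i ∧ ssEst s hne i ≤ l.count i + s.T.inf' hne s.c :=
  spaceSaving_estimate_bounds_general k l s hrun hne i
end
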